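/- If (û, ŵ) ∈ W^{1,2}_loc((0, ∞), ℝ²) satisfies ∫₀¹ r ρ^el(r) dr < ∞, then lim_{r→0} û(r) = 0 and lim_{r→0} ŵ(r) = 0. -/

import Mathlib

/-!
If `√r f'` and `f / √r` are square integrable near `0`, then `(f²)' = 2 f f'` is integrable there
(AM-GM: `|2 f f'| ≤ r f'² + f² / r`), so `f²` has a limit at `0⁺`; the limit vanishes because
`f² / r` is integrable while `1 / r` is not. The energy bound gives both hypotheses for `ŵ`, hence
`ŵ → 0`. Then `ŵ² ≤ 1` near `0`, so `r û'² ≤ 2 r (ŵ² - 1 + û')² + 2 r` is integrable there as well,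
and the same argument applies to `û`.
-/

open MeasureTheory Set Filter Topology

theorem aestronglyMeasurable_restrict_of_hasDerivAt {f f' : ℝ → ℝ} {s : Set ℝ}
    (hs : MeasurableSet s) (hderiv : ∀ x ∈ s, HasDerivAt f (f' x) x) :
    AEStronglyMeasurable f (volume.restrict s) ∧ AEStronglyMeasurable f' (volume.restrict s) :=
  ⟨ContinuousOn.aestronglyMeasurable
      (fun x hx => (hderiv x hx).continuousAt.continuousWithinAt) hs,
    (aestronglyMeasurable_deriv f _).congr <|
      (ae_restrict_iff' hs).2 <| ae_of_all _ fun x hx => (hderiv x hx).deriv⟩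

theorem MeasureTheory.IntegrableOn.of_forall_nonneg_le {α : Type*} [MeasurableSpace α]
    {μ : Measure α} {f g : α → ℝ} {s : Set α} (hg : IntegrableOn g s μ) (hs : MeasurableSet s)
    (hf : AEStronglyMeasurable f (μ.restrict s)) (h : ∀ x ∈ s, 0 ≤ f x ∧ f x ≤ g x) :
    IntegrableOn f s μ :=
  Integrable.mono_nonneg hg hf (ae_restrict_of_forall_mem hs fun x hx => (h x hx).1)
    (ae_restrict_of_forall_mem hs fun x hx => (h x hx).2)

theorem abs_two_mul_mul_le {r : ℝ} (hr : 0 < r) (a b : ℝ) :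
    |2 * a * b| ≤ r * b ^ 2 + a ^ 2 / r := by
  have hplus : r * b ^ 2 + a ^ 2 / r + 2 * a * b = (r * b + a) ^ 2 / r := by field_simp; ring
  have hminus : r * b ^ 2 + a ^ 2 / r - 2 * a * b = (r * b - a) ^ 2 / r := by field_simp; ring
  have : 0 ≤ (r * b + a) ^ 2 / r := by positivity
  have : 0 ≤ (r * b - a) ^ 2 / r := by positivity
  rw [abs_le]
  constructor <;> linarith

theorem exists_tendsto_nhdsGT_of_hasDerivAt_of_integrableOn {E : Type*} [NormedAddCommGroup E]
    [NormedSpace ℝ E] [CompleteSpace E] {f f' : ℝ → E} {a b : ℝ} (hab : a < b)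
    (hderiv : ∀ x ∈ Ioo a b, HasDerivAt f (f' x) x) (hint : IntegrableOn f' (Ioo a b)) :
    ∃ L, Tendsto f (𝓝[>] a) (𝓝 L) := by
  obtain ⟨c, hac, hcb⟩ := exists_between hab
  have hint_c : IntegrableOn f' (Icc a c) := by
    rw [integrableOn_Icc_iff_integrableOn_Ioo]
    exact hint.mono_set (Ioo_subset_Ioo_right hcb.le)
  have hftc : ∀ x ∈ Ioo a c, f x = f c - ∫ t in x..c, f' t := fun x hx => by
    have hderiv_xc : ∀ t ∈ uIcc x c, HasDerivAt f (f' t) t := fun t ht => by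
      rw [uIcc_of_le hx.2.le] at ht
      exact hderiv t ⟨hx.1.trans_le ht.1, ht.2.trans_lt hcb⟩
    rw [intervalIntegral.integral_eq_sub_of_hasDerivAt hderiv_xc, sub_sub_cancel]
    rw [intervalIntegrable_iff_integrableOn_Icc_of_le hx.2.le]
    exact hint_c.mono_set (Icc_subset_Icc_left hx.1.le)
  have hprim : Tendsto (fun x => ∫ t in x..c, f' t) (𝓝[>] a) (𝓝 (∫ t in a..c, f' t)) := by
    rw [← uIcc_of_le hac.le] at hint_c
    have hcont := intervalIntegral.continuousOn_primitive_interval_left hint_c a left_mem_uIcc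
    rw [uIcc_of_le hac.le] at hcont
    rw [← nhdsWithin_Ioo_eq_nhdsGT hac]
    exact hcont.tendsto.mono_left (nhdsWithin_mono _ Ioo_subset_Icc_self)
  refine ⟨f c - ∫ t in a..c, f' t, (tendsto_const_nhds.sub hprim).congr' ?_⟩
  filter_upwards [Ioo_mem_nhdsGT hac] with x hx using (hftc x hx).symm

theorem eq_zero_of_tendsto_of_integrableOn_div {g : ℝ → ℝ} {b L : ℝ} (hb : 0 < b)
    (hg : Tendsto g (𝓝[>] 0) (𝓝 L)) (hint : IntegrableOn (fun r => g r / r) (Ioo 0 b)) :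
    L = 0 := by
  by_contra hL
  have hL2 : 0 < |L| / 2 := by positivity
  obtain ⟨d, ⟨hd0, hdb⟩, hgd⟩ : ∃ d ∈ Ioc 0 b, Ioo 0 d ⊆ {r | |L| / 2 ≤ |g r|} :=
    (mem_nhdsGT_iff_exists_mem_Ioc_Ioo_subset hb).1 <|
      hg.abs.eventually (eventually_ge_nhds (half_lt_self (abs_pos.2 hL)))
  have hinv : IntegrableOn (fun r : ℝ => |L| / 2 * r⁻¹) (Ioo 0 d) := by
    refine (hint.mono_set (Ioo_subset_Ioo_right hdb)).norm.mono' (by fun_prop) ?_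
    refine ae_restrict_of_forall_mem measurableSet_Ioo fun r hr => ?_
    have hr0 := hr.1
    rw [norm_div, Real.norm_of_nonneg (by positivity), Real.norm_of_nonneg hr0.le,
      Real.norm_eq_abs, div_eq_mul_inv]
    exact mul_le_mul_of_nonneg_right (hgd hr) (by positivity)
  have hinv' : IntegrableOn (fun r : ℝ => r⁻¹) (Ioo 0 d) :=
    IntegrableOn.congr_fun (hinv.const_mul (|L| / 2)⁻¹)
      (fun r _ => inv_mul_cancel_left₀ hL2.ne' _) measurableSet_Ioo
  have := (intervalIntegrable_iff_integrableOn_Ioo_of_le hd0.le).2 hinv'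
  simp [intervalIntegrable_inv_iff, hd0.ne, hd0.le] at this

theorem tendsto_nhdsGT_zero_of_integrableOn_mul_sq_deriv {f f' : ℝ → ℝ} {b : ℝ} (hb : 0 < b)
    (hderiv : ∀ r ∈ Ioo 0 b, HasDerivAt f (f' r) r)
    (hf' : IntegrableOn (fun r => r * f' r ^ 2) (Ioo 0 b))
    (hf : IntegrableOn (fun r => f r ^ 2 / r) (Ioo 0 b)) :
    Tendsto f (𝓝[>] 0) (𝓝 0) := by
  have hderiv_sq : ∀ r ∈ Ioo 0 b, HasDerivAt (fun r => f r ^ 2) (2 * f r * f' r) r :=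
    fun r hr => by simpa using (hderiv r hr).fun_pow 2
  obtain ⟨hf_meas, hf'_meas⟩ :=
    aestronglyMeasurable_restrict_of_hasDerivAt measurableSet_Ioo hderiv
  have hint : IntegrableOn (fun r => 2 * f r * f' r) (Ioo 0 b) :=
    (hf'.add hf).mono' (by fun_prop) <| ae_restrict_of_forall_mem measurableSet_Ioo
      fun r hr => abs_two_mul_mul_le hr.1 _ _
  obtain ⟨L, hL⟩ := exists_tendsto_nhdsGT_of_hasDerivAt_of_integrableOn hb hderiv_sq hint
  obtain rfl := eq_zero_of_tendsto_of_integrableOn_div hb hL hf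
  rw [tendsto_zero_iff_abs_tendsto_zero]
  have hsqrt := (Real.continuous_sqrt.tendsto 0).comp hL
  rw [Real.sqrt_zero] at hsqrt
  exact hsqrt.congr fun r => Real.sqrt_sq_eq_abs (f r)

noncomputable def elasticDensity (u w u' w' : ℝ → ℝ) (r : ℝ) : ℝ :=
  (w r ^ 2 - 1 + u' r) ^ 2 + (u r / r) ^ 2 + w' r ^ 2 + w r ^ 2 / r ^ 2

theorem integrableOn_terms_of_integrableOn_mul_elasticDensity {u w u' w' : ℝ → ℝ} {s : Set ℝ}
    (hs : MeasurableSet s) (hs₀ : s ⊆ Ioi 0) (hu : AEStronglyMeasurable u (volume.restrict s))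
    (hw : AEStronglyMeasurable w (volume.restrict s))
    (hu' : AEStronglyMeasurable u' (volume.restrict s))
    (hw' : AEStronglyMeasurable w' (volume.restrict s))
    (hE : IntegrableOn (fun r => r * elasticDensity u w u' w' r) s) :
    IntegrableOn (fun r => r * (w r ^ 2 - 1 + u' r) ^ 2) s ∧
      IntegrableOn (fun r => u r ^ 2 / r) s ∧
      IntegrableOn (fun r => r * w' r ^ 2) s ∧
      IntegrableOn (fun r => w r ^ 2 / r) s := by
  have hterms : ∀ r, 0 ≤ (w r ^ 2 - 1 + u' r) ^ 2 ∧ 0 ≤ (u r / r) ^ 2 ∧ 0 ≤ w' r ^ 2 ∧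
      0 ≤ w r ^ 2 / r ^ 2 := fun r => ⟨sq_nonneg _, sq_nonneg _, sq_nonneg _, by positivity⟩
  refine ⟨?_, ?_, ?_, ?_⟩
  · refine hE.of_forall_nonneg_le hs (by fun_prop) fun r hr => ?_
    obtain ⟨h₁, h₂, h₃, h₄⟩ := hterms r
    have hr₀ : 0 < r := hs₀ hr
    exact ⟨by positivity, by unfold elasticDensity; gcongr; linarith⟩
  · refine hE.of_forall_nonneg_le hs (by fun_prop : AEMeasurable _ _).aestronglyMeasurable
      fun r hr => ?_
    obtain ⟨h₁, h₂, h₃, h₄⟩ := hterms r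
    have hr₀ : 0 < r := hs₀ hr
    rw [show u r ^ 2 / r = r * (u r / r) ^ 2 by field_simp]
    exact ⟨by positivity, by unfold elasticDensity; gcongr; linarith⟩
  · refine hE.of_forall_nonneg_le hs (by fun_prop) fun r hr => ?_
    obtain ⟨h₁, h₂, h₃, h₄⟩ := hterms r
    have hr₀ : 0 < r := hs₀ hr
    exact ⟨by positivity, by unfold elasticDensity; gcongr; linarith⟩
  · refine hE.of_forall_nonneg_le hs (by fun_prop : AEMeasurable _ _).aestronglyMeasurable
      fun r hr => ?_
    obtain ⟨h₁, h₂, h₃, h₄⟩ := hterms r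
    have hr₀ : 0 < r := hs₀ hr
    rw [show w r ^ 2 / r = r * (w r ^ 2 / r ^ 2) by field_simp]
    exact ⟨by positivity, by unfold elasticDensity; gcongr; linarith⟩

theorem sq_le_two_mul_add_sq_add_two {a : ℝ} (ha : a ^ 2 ≤ 1) (b : ℝ) :
    b ^ 2 ≤ 2 * (a + b) ^ 2 + 2 := by
  nlinarith [sq_nonneg (2 * a + b)]

theorem exists_integrableOn_mul_sq_of_tendsto_zero {w v : ℝ → ℝ}
    (hw : Tendsto w (𝓝[>] 0) (𝓝 0)) (hv : AEStronglyMeasurable v (volume.restrict (Ioo 0 1)))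
    (hA : IntegrableOn (fun r => r * (w r ^ 2 - 1 + v r) ^ 2) (Ioo 0 1)) :
    ∃ b ∈ Ioc (0:ℝ) 1, IntegrableOn (fun r => r * v r ^ 2) (Ioo 0 b) := by
  obtain ⟨b, ⟨hb, hb₁⟩, hwb⟩ : ∃ b ∈ Ioc (0:ℝ) 1, Ioo 0 b ⊆ {r | w r ^ 2 ≤ 1} :=
    (mem_nhdsGT_iff_exists_mem_Ioc_Ioo_subset one_pos).1 <|
      (hw.pow 2).eventually (eventually_le_nhds (by norm_num))
  have hsub : Ioo 0 b ⊆ Ioo 0 1 := Ioo_subset_Ioo_right hb₁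
  have hdom : IntegrableOn (fun r => 2 * (r * (w r ^ 2 - 1 + v r) ^ 2) + 2 * r) (Ioo 0 b) :=
    ((hA.mono_set hsub).const_mul 2).add
      ((continuous_const.mul continuous_id).integrableOn_Icc.mono_set Ioo_subset_Icc_self)
  have hv_b := hv.mono_measure (Measure.restrict_mono hsub le_rfl)
  refine ⟨b, ⟨hb, hb₁⟩, hdom.of_forall_nonneg_le measurableSet_Ioo (by fun_prop) fun r hr => ?_⟩
  have hr₀ := hr.1
  have hw₁ : w r ^ 2 ≤ 1 := hwb hr
  have hw₁' : (w r ^ 2 - 1) ^ 2 ≤ 1 := by nlinarith [sq_nonneg (w r)]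
  refine ⟨by positivity, ?_⟩
  nlinarith [mul_le_mul_of_nonneg_left (sq_le_two_mul_add_sq_add_two hw₁' (v r)) hr₀.le]

/-- If `(û, ŵ) ∈ W^{1,2}_loc((0,∞), ℝ²)` satisfies
`∫₀¹ r ρ^el(r) dr < ∞`, where
`ρ^el(r) = (ŵ² - 1 + û')² + (û/r)² + ŵ'² + ŵ²/r²`,
then `û(r) → 0` and `ŵ(r) → 0` as `r → 0`.
Here `uh, wh` stand for `û, ŵ` (continuous representatives), with pointwise
derivatives `uh', wh'`. -/
theorem stmt2 (uh wh uh' wh' : ℝ → ℝ)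
    (hu : ∀ r ∈ Ioi (0 : ℝ), HasDerivAt uh (uh' r) r)
    (hw : ∀ r ∈ Ioi (0 : ℝ), HasDerivAt wh (wh' r) r)
    (hE : IntegrableOn
      (fun r => r * ((wh r ^ 2 - 1 + uh' r) ^ 2 + (uh r / r) ^ 2 + wh' r ^ 2 + wh r ^ 2 / r ^ 2))
      (Ioo 0 1)) :
    Tendsto uh (nhdsWithin 0 (Ioi 0)) (nhds 0) ∧
    Tendsto wh (nhdsWithin 0 (Ioi 0)) (nhds 0) := by
  have hu₁ : ∀ r ∈ Ioo 0 1, HasDerivAt uh (uh' r) r := fun r hr => hu r hr.1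
  have hw₁ : ∀ r ∈ Ioo 0 1, HasDerivAt wh (wh' r) r := fun r hr => hw r hr.1
  obtain ⟨hu_meas, hu'_meas⟩ := aestronglyMeasurable_restrict_of_hasDerivAt measurableSet_Ioo hu₁
  obtain ⟨hw_meas, hw'_meas⟩ := aestronglyMeasurable_restrict_of_hasDerivAt measurableSet_Ioo hw₁
  obtain ⟨hA_int, hu_int, hw'_int, hw_int⟩ :=
    integrableOn_terms_of_integrableOn_mul_elasticDensity measurableSet_Ioo Ioo_subset_Ioi_self
      hu_meas hw_meas hu'_meas hw'_meas hE
  have hw_lim : Tendsto wh (𝓝[>] 0) (𝓝 0) :=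
    tendsto_nhdsGT_zero_of_integrableOn_mul_sq_deriv one_pos hw₁ hw'_int hw_int
  obtain ⟨b, ⟨hb, hb₁⟩, hu'_int⟩ :=
    exists_integrableOn_mul_sq_of_tendsto_zero hw_lim hu'_meas hA_int
  have hsub : Ioo 0 b ⊆ Ioo 0 1 := Ioo_subset_Ioo_right hb₁
  exact ⟨tendsto_nhdsGT_zero_of_integrableOn_mul_sq_deriv hb (fun r hr => hu₁ r (hsub hr))
    hu'_int (hu_int.mono_set hsub), hw_lim⟩
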